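/- If E is a (possibly non-finite) directed graph and R is an associative unital ring, then the Leavitt path algebra L_R(E), equipped with its canonical ℤ-gradation S = ⊕_{n∈ℤ} S_n, is nearly epsilon-strongly ℤ-graded: for every n ∈ ℤ and every s ∈ S_n it holds that s ∈ (S_n S_{−n}) s and s ∈ s (S_{−n} S_n). -/
import Mathlib


namespace LPA

/-- Generators of the Leavitt path algebra: a vertex `v`, a (real) edge `f`,
or a ghost edge `f*`. -/
inductive Gen (V Ed : Type*) : Type _
  | vertex : V → Gen V Ed
  | edge : Ed → Gen V Ed
  | ghost : Ed → Gen V Ed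

/-- The free `R`-ring on the generators, with `R` commuting with the generators. -/
abbrev FreeLPA (R V Ed : Type*) [Ring R] : Type _ := MonoidAlgebra R (FreeMonoid (Gen V Ed))

noncomputable def genF (R : Type*) [Ring R] {V Ed : Type*} (x : Gen V Ed) : FreeLPA R V Ed :=
  MonoidAlgebra.of R (FreeMonoid (Gen V Ed)) (FreeMonoid.of x)

/-- The defining relations of the Leavitt path algebra of the graph with vertices `V`,
edges `Ed`, source map `sf` and range map `rf`. -/
inductive Rel (R : Type*) [Ring R] {V Ed : Type*} (sf rf : Ed → V) :
    FreeLPA R V Ed → FreeLPA R V Ed → Prop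
  | vertex_eq (v : V) :
      Rel R sf rf (genF R (Gen.vertex v) * genF R (Gen.vertex v)) (genF R (Gen.vertex v))
  | vertex_ne {v w : V} (h : v ≠ w) :
      Rel R sf rf (genF R (Gen.vertex v) * genF R (Gen.vertex w)) 0
  | src_edge (f : Ed) :
      Rel R sf rf (genF R (Gen.vertex (sf f)) * genF R (Gen.edge f)) (genF R (Gen.edge f))
  | edge_rng (f : Ed) :
      Rel R sf rf (genF R (Gen.edge f) * genF R (Gen.vertex (rf f))) (genF R (Gen.edge f))
  | rng_ghost (f : Ed) :
      Rel R sf rf (genF R (Gen.vertex (rf f)) * genF R (Gen.ghost f)) (genF R (Gen.ghost f))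
  | ghost_src (f : Ed) :
      Rel R sf rf (genF R (Gen.ghost f) * genF R (Gen.vertex (sf f))) (genF R (Gen.ghost f))
  | ghost_edge_eq (f : Ed) :
      Rel R sf rf (genF R (Gen.ghost f) * genF R (Gen.edge f)) (genF R (Gen.vertex (rf f)))
  | ghost_edge_ne {f f' : Ed} (h : f ≠ f') :
      Rel R sf rf (genF R (Gen.ghost f) * genF R (Gen.edge f')) 0
  | cuntz_krieger (v : V) (h1 : {f : Ed | sf f = v}.Nonempty) (h2 : {f : Ed | sf f = v}.Finite) :
      Rel R sf rf (∑ f ∈ h2.toFinset, genF R (Gen.edge f) * genF R (Gen.ghost f))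
        (genF R (Gen.vertex v))

/-- The Leavitt path algebra `L_R(E)` (as the ambient unital quotient ring in which the
span of the monomials `α β*` is the Leavitt path algebra). -/
abbrev LeavittPathAlgebra (R : Type*) [Ring R] {V Ed : Type*} (sf rf : Ed → V) : Type _ :=
  RingQuot (Rel R sf rf)

noncomputable def gen (R : Type*) [Ring R] {V Ed : Type*} (sf rf : Ed → V) (x : Gen V Ed) :
    LeavittPathAlgebra R sf rf :=
  RingQuot.mkRingHom (Rel R sf rf) (genF R x)

noncomputable def ofR (R : Type*) [Ring R] {V Ed : Type*} (sf rf : Ed → V) (r : R) :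
    LeavittPathAlgebra R sf rf :=
  RingQuot.mkRingHom (Rel R sf rf) (MonoidAlgebra.single (1 : FreeMonoid (Gen V Ed)) r)

/-- Paths in the directed graph. `GPath sf rf u w` are the paths with source `u`
and range `w`; a vertex is a path of length `0`. -/
inductive GPath {V Ed : Type*} (sf rf : Ed → V) : V → V → Type _
  | nil (v : V) : GPath sf rf v v
  | cons (f : Ed) {w : V} (p : GPath sf rf (rf f) w) : GPath sf rf (sf f) w

namespace GPath

def length {V Ed : Type*} {sf rf : Ed → V} : {u w : V} → GPath sf rf u w → ℕ
  | _, _, nil _ => 0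
  | _, _, cons _ p => length p + 1

def edgeList {V Ed : Type*} {sf rf : Ed → V} : {u w : V} → GPath sf rf u w → List Ed
  | _, _, nil _ => []
  | _, _, cons f p => f :: edgeList p

/-- The degree of a path with respect to a degree map `dg : Ed → G`. -/
def degree {V Ed : Type*} {sf rf : Ed → V} {G : Type*} [Group G] (dg : Ed → G) :
    {u w : V} → GPath sf rf u w → G
  | _, _, nil _ => 1
  | _, _, cons f p => dg f * degree dg p

end GPath

/-- The element `α` of `L_R(E)` associated to a path `α` (a vertex if `α` has length 0). -/
noncomputable def realElem (R : Type*) [Ring R] {V Ed : Type*} (sf rf : Ed → V) :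
    {u w : V} → GPath sf rf u w → LeavittPathAlgebra R sf rf
  | _, _, .nil v => gen R sf rf (Gen.vertex v)
  | _, _, .cons f p => gen R sf rf (Gen.edge f) * realElem R sf rf p

/-- The element `α* = α_n* ⋯ α_1*` of `L_R(E)` associated to a path `α`. -/
noncomputable def ghostElem (R : Type*) [Ring R] {V Ed : Type*} (sf rf : Ed → V) :
    {u w : V} → GPath sf rf u w → LeavittPathAlgebra R sf rf
  | _, _, .nil v => gen R sf rf (Gen.vertex v)
  | _, _, .cons f p => ghostElem R sf rf p * gen R sf rf (Gen.ghost f)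

/-- The product `AB` of two additive subgroups of a ring: the additive subgroup
generated by all products `ab`, `a ∈ A`, `b ∈ B`. -/
def sgMul {A : Type*} [NonUnitalRing A] (B C : AddSubgroup A) : AddSubgroup A :=
  AddSubgroup.closure {x | ∃ b ∈ B, ∃ c ∈ C, x = b * c}

/-- The homogeneous component `S_g` of the standard `G`-gradation of `L_R(E)` attached
to the degree map `dg : Ed → G`: the `R`-span of the monomials `α β*` with
`r(α) = r(β)` and `deg α * (deg β)⁻¹ = g`. -/
noncomputable def component (R : Type*) [Ring R] {V Ed : Type*} (sf rf : Ed → V) {G : Type*} [Group G]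
    (dg : Ed → G) (g : G) : AddSubgroup (LeavittPathAlgebra R sf rf) :=
  AddSubgroup.closure
    {x | ∃ (r : R) (u u' w : V) (α : GPath sf rf u w) (β : GPath sf rf u' w),
      α.degree dg * (β.degree dg)⁻¹ = g ∧
      x = ofR R sf rf r * (realElem R sf rf α * ghostElem R sf rf β)}

/-- The homogeneous component `S_n` of the canonical `ℤ`-gradation of `L_R(E)`:
the `R`-span of the monomials `α β*` with `r(α) = r(β)` and `l(α) - l(β) = n`. -/
noncomputable def componentZ (R : Type*) [Ring R] {V Ed : Type*} (sf rf : Ed → V) (n : ℤ) :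
    AddSubgroup (LeavittPathAlgebra R sf rf) :=
  AddSubgroup.closure
    {x | ∃ (r : R) (u u' w : V) (α : GPath sf rf u w) (β : GPath sf rf u' w),
      (α.length : ℤ) - (β.length : ℤ) = n ∧
      x = ofR R sf rf r * (realElem R sf rf α * ghostElem R sf rf β)}

end LPA

namespace LPA

section Aux

variable (R : Type*) [Ring R] {V Ed : Type*} (sf rf : Ed → V)

/-! ### Generator shorthands -/

noncomputable def gV (v : V) : LeavittPathAlgebra R sf rf := gen R sf rf (Gen.vertex v)
noncomputable def gE (f : Ed) : LeavittPathAlgebra R sf rf := gen R sf rf (Gen.edge f)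
noncomputable def gG (f : Ed) : LeavittPathAlgebra R sf rf := gen R sf rf (Gen.ghost f)

lemma gV_mul_self (v : V) : gV R sf rf v * gV R sf rf v = gV R sf rf v := by
  simp only [gV, gen, ← map_mul]
  exact RingQuot.mkRingHom_rel (Rel.vertex_eq v)

lemma gV_mul_gV_ne {v w : V} (h : v ≠ w) : gV R sf rf v * gV R sf rf w = 0 := by
  simp only [gV, gen, ← map_mul]
  rw [RingQuot.mkRingHom_rel (Rel.vertex_ne h), map_zero]

lemma gVs_mul_gE (f : Ed) : gV R sf rf (sf f) * gE R sf rf f = gE R sf rf f := by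
  simp only [gV, gE, gen, ← map_mul]
  exact RingQuot.mkRingHom_rel (Rel.src_edge f)

lemma gE_mul_gVr (f : Ed) : gE R sf rf f * gV R sf rf (rf f) = gE R sf rf f := by
  simp only [gV, gE, gen, ← map_mul]
  exact RingQuot.mkRingHom_rel (Rel.edge_rng f)

lemma gVr_mul_gG (f : Ed) : gV R sf rf (rf f) * gG R sf rf f = gG R sf rf f := by
  simp only [gV, gG, gen, ← map_mul]
  exact RingQuot.mkRingHom_rel (Rel.rng_ghost f)

lemma gG_mul_gVs (f : Ed) : gG R sf rf f * gV R sf rf (sf f) = gG R sf rf f := by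
  simp only [gV, gG, gen, ← map_mul]
  exact RingQuot.mkRingHom_rel (Rel.ghost_src f)

lemma gG_mul_gE_self (f : Ed) : gG R sf rf f * gE R sf rf f = gV R sf rf (rf f) := by
  simp only [gV, gE, gG, gen, ← map_mul]
  exact RingQuot.mkRingHom_rel (Rel.ghost_edge_eq f)

lemma gG_mul_gE_ne {f f' : Ed} (h : f ≠ f') : gG R sf rf f * gE R sf rf f' = 0 := by
  simp only [gE, gG, gen, ← map_mul]
  rw [RingQuot.mkRingHom_rel (Rel.ghost_edge_ne h), map_zero]

lemma gV_mul_gE_ne {v : V} {f : Ed} (h : v ≠ sf f) : gV R sf rf v * gE R sf rf f = 0 := by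
  rw [← gVs_mul_gE, ← mul_assoc, gV_mul_gV_ne R sf rf h, zero_mul]

lemma gG_mul_gV_ne {v : V} {f : Ed} (h : sf f ≠ v) : gG R sf rf f * gV R sf rf v = 0 := by
  rw [← gG_mul_gVs, mul_assoc, gV_mul_gV_ne R sf rf h, mul_zero]

/-! ### realElem / ghostElem structural equations -/

lemma realElem_nil (v : V) : realElem R sf rf (GPath.nil v) = gV R sf rf v := rfl

lemma realElem_cons {w : V} (f : Ed) (p : GPath sf rf (rf f) w) :
    realElem R sf rf (GPath.cons f p) = gE R sf rf f * realElem R sf rf p := rfl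

lemma ghostElem_nil (v : V) : ghostElem R sf rf (GPath.nil v) = gV R sf rf v := rfl

lemma ghostElem_cons {w : V} (f : Ed) (p : GPath sf rf (rf f) w) :
    ghostElem R sf rf (GPath.cons f p) = ghostElem R sf rf p * gG R sf rf f := rfl

lemma src_mul_real {u w : V} (α : GPath sf rf u w) :
    gV R sf rf u * realElem R sf rf α = realElem R sf rf α := by
  induction α with
  | nil v => rw [realElem_nil, gV_mul_self]
  | cons f p ih => rw [realElem_cons, ← mul_assoc, gVs_mul_gE]

lemma real_mul_rng {u w : V} (α : GPath sf rf u w) :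
    realElem R sf rf α * gV R sf rf w = realElem R sf rf α := by
  induction α with
  | nil v => rw [realElem_nil, gV_mul_self]
  | cons f p ih => rw [realElem_cons, mul_assoc, ih]

lemma rng_mul_ghost {u w : V} (α : GPath sf rf u w) :
    gV R sf rf w * ghostElem R sf rf α = ghostElem R sf rf α := by
  induction α with
  | nil v => rw [ghostElem_nil, gV_mul_self]
  | cons f p ih => rw [ghostElem_cons, ← mul_assoc, ih]

lemma ghost_mul_src {u w : V} (α : GPath sf rf u w) :
    ghostElem R sf rf α * gV R sf rf u = ghostElem R sf rf α := by
  induction α with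
  | nil v => rw [ghostElem_nil, gV_mul_self]
  | cons f p ih => rw [ghostElem_cons, mul_assoc, gG_mul_gVs]

lemma gV_mul_real_ne {v u w : V} (h : v ≠ u) (α : GPath sf rf u w) :
    gV R sf rf v * realElem R sf rf α = 0 := by
  cases α with
  | nil u => rw [realElem_nil, gV_mul_gV_ne R sf rf h]
  | cons f p => rw [realElem_cons, ← mul_assoc, gV_mul_gE_ne R sf rf h, zero_mul]

lemma ghost_mul_gV_ne {v u w : V} (h : u ≠ v) (α : GPath sf rf u w) :
    ghostElem R sf rf α * gV R sf rf v = 0 := by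
  cases α with
  | nil u => rw [ghostElem_nil, gV_mul_gV_ne R sf rf h]
  | cons f p => rw [ghostElem_cons, mul_assoc, gG_mul_gV_ne R sf rf h, mul_zero]

lemma ghost_mul_real_self {u w : V} (α : GPath sf rf u w) :
    ghostElem R sf rf α * realElem R sf rf α = gV R sf rf w := by
  induction α with
  | nil v => rw [realElem_nil, ghostElem_nil, gV_mul_self]
  | cons f p ih =>
      rw [realElem_cons, ghostElem_cons, mul_assoc, ← mul_assoc (gG R sf rf f),
        gG_mul_gE_self, src_mul_real, ih]

/-! ### The key division lemma for `α* γ` -/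

theorem ghost_mul_real_cases {u w : V} (α : GPath sf rf u w) :
    ∀ {u' w' : V} (γ : GPath sf rf u' w'),
    (∃ δ : GPath sf rf w w',
      ghostElem R sf rf α * realElem R sf rf γ = realElem R sf rf δ ∧
      ghostElem R sf rf γ * realElem R sf rf α = ghostElem R sf rf δ ∧
      realElem R sf rf γ = realElem R sf rf α * realElem R sf rf δ ∧
      ghostElem R sf rf γ = ghostElem R sf rf δ * ghostElem R sf rf α) ∨
    (∃ δ : GPath sf rf w' w,
      ghostElem R sf rf γ * realElem R sf rf α = realElem R sf rf δ ∧
      ghostElem R sf rf α * realElem R sf rf γ = ghostElem R sf rf δ ∧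
      realElem R sf rf α = realElem R sf rf γ * realElem R sf rf δ ∧
      ghostElem R sf rf α = ghostElem R sf rf δ * ghostElem R sf rf γ) ∨
    (ghostElem R sf rf α * realElem R sf rf γ = 0 ∧
      ghostElem R sf rf γ * realElem R sf rf α = 0) := by
  induction α with
  | nil v =>
      intro u' w' γ
      cases γ with
      | nil =>
          by_cases h : v = u'
          · subst h
            exact Or.inl ⟨GPath.nil v, by rw [realElem_nil, ghostElem_nil, gV_mul_self],
              by rw [realElem_nil, ghostElem_nil, gV_mul_self],
              by rw [realElem_nil, gV_mul_self],
              by rw [ghostElem_nil, gV_mul_self]⟩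
          · exact Or.inr (Or.inr ⟨by rw [realElem_nil, ghostElem_nil, gV_mul_gV_ne R sf rf h],
              by rw [realElem_nil, ghostElem_nil, gV_mul_gV_ne R sf rf (Ne.symm h)]⟩)
      | cons f q =>
          by_cases h : v = sf f
          · subst h
            exact Or.inl ⟨GPath.cons f q,
              by rw [ghostElem_nil, src_mul_real],
              by rw [realElem_nil, ghost_mul_src],
              by rw [realElem_nil, src_mul_real],
              by rw [ghostElem_nil, ghost_mul_src]⟩
          · exact Or.inr (Or.inr ⟨by rw [ghostElem_nil, gV_mul_real_ne R sf rf h],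
              by rw [realElem_nil, ghost_mul_gV_ne R sf rf (Ne.symm h)]⟩)
  | cons f p ih =>
      intro u' w' γ
      cases γ with
      | nil =>
          by_cases h : u' = sf f
          · subst h
            exact Or.inr (Or.inl ⟨GPath.cons f p,
              by rw [ghostElem_nil, src_mul_real],
              by rw [realElem_nil, ghost_mul_src],
              by rw [realElem_nil, src_mul_real],
              by rw [ghostElem_nil, ghost_mul_src]⟩)
          · exact Or.inr (Or.inr ⟨by rw [realElem_nil, ghost_mul_gV_ne R sf rf (Ne.symm h)],
              by rw [ghostElem_nil, gV_mul_real_ne R sf rf h]⟩)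
      | cons f' q =>
          by_cases h : f = f'
          · subst h
            have hA : ghostElem R sf rf (GPath.cons f p) * realElem R sf rf (GPath.cons f q) =
                ghostElem R sf rf p * realElem R sf rf q := by
              rw [realElem_cons, ghostElem_cons, mul_assoc, ← mul_assoc (gG R sf rf f),
                gG_mul_gE_self, src_mul_real]
            have hB : ghostElem R sf rf (GPath.cons f q) * realElem R sf rf (GPath.cons f p) =
                ghostElem R sf rf q * realElem R sf rf p := by
              rw [realElem_cons, ghostElem_cons, mul_assoc, ← mul_assoc (gG R sf rf f),
                gG_mul_gE_self, src_mul_real]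
            rcases ih q with ⟨δ, h1, h2, h3, h4⟩ | ⟨δ, h1, h2, h3, h4⟩ | ⟨h1, h2⟩
            · refine Or.inl ⟨δ, by rw [hA, h1], by rw [hB, h2], ?_, ?_⟩
              · rw [realElem_cons, realElem_cons, h3, mul_assoc]
              · rw [ghostElem_cons, ghostElem_cons, h4, mul_assoc]
            · refine Or.inr (Or.inl ⟨δ, by rw [hB, h1], by rw [hA, h2], ?_, ?_⟩)
              · rw [realElem_cons, realElem_cons, h3, mul_assoc]
              · rw [ghostElem_cons, ghostElem_cons, h4, mul_assoc]
            · exact Or.inr (Or.inr ⟨by rw [hA, h1], by rw [hB, h2]⟩)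
          · refine Or.inr (Or.inr ⟨?_, ?_⟩)
            · rw [realElem_cons, ghostElem_cons, mul_assoc, ← mul_assoc (gG R sf rf f),
                gG_mul_gE_ne R sf rf h, zero_mul, mul_zero]
            · rw [realElem_cons, ghostElem_cons, mul_assoc, ← mul_assoc (gG R sf rf f'),
                gG_mul_gE_ne R sf rf (Ne.symm h), zero_mul, mul_zero]

/-! ### The idempotents `α α*` pairwise commute -/

lemma e_mul_e_cases {u w u' w' : V} (α : GPath sf rf u w) (γ : GPath sf rf u' w') :
    (realElem R sf rf α * ghostElem R sf rf α * (realElem R sf rf γ * ghostElem R sf rf γ) =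
        realElem R sf rf γ * ghostElem R sf rf γ ∧
      realElem R sf rf γ * ghostElem R sf rf γ * (realElem R sf rf α * ghostElem R sf rf α) =
        realElem R sf rf γ * ghostElem R sf rf γ) ∨
    (realElem R sf rf α * ghostElem R sf rf α * (realElem R sf rf γ * ghostElem R sf rf γ) =
        realElem R sf rf α * ghostElem R sf rf α ∧
      realElem R sf rf γ * ghostElem R sf rf γ * (realElem R sf rf α * ghostElem R sf rf α) =
        realElem R sf rf α * ghostElem R sf rf α) ∨
    (realElem R sf rf α * ghostElem R sf rf α * (realElem R sf rf γ * ghostElem R sf rf γ) = 0 ∧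
      realElem R sf rf γ * ghostElem R sf rf γ * (realElem R sf rf α * ghostElem R sf rf α) = 0) := by
  rcases ghost_mul_real_cases R sf rf α γ with ⟨δ, h1, h2, h3, h4⟩ | ⟨δ, h1, h2, h3, h4⟩ | ⟨h1, h2⟩
  · refine Or.inl ⟨?_, ?_⟩
    · simp only [mul_assoc]
      rw [← mul_assoc (ghostElem R sf rf α), h1, ← mul_assoc, ← h3]
    · simp only [mul_assoc]
      rw [← mul_assoc (ghostElem R sf rf γ), h2, ← h4]
  · refine Or.inr (Or.inl ⟨?_, ?_⟩)
    · simp only [mul_assoc]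
      rw [← mul_assoc (ghostElem R sf rf α), h2, ← h4]
    · simp only [mul_assoc]
      rw [← mul_assoc (ghostElem R sf rf γ), h1, ← mul_assoc, ← h3]
  · refine Or.inr (Or.inr ⟨?_, ?_⟩)
    · simp only [mul_assoc]
      rw [← mul_assoc (ghostElem R sf rf α), h1, zero_mul, mul_zero]
    · simp only [mul_assoc]
      rw [← mul_assoc (ghostElem R sf rf γ), h2, zero_mul, mul_zero]

/-! ### `ofR` commutes with the monomials -/

lemma ofR_one : ofR R sf rf (1 : R) = 1 := by
  rw [ofR, ← MonoidAlgebra.one_def, map_one]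

lemma ofR_comm_gen (r : R) (x : Gen V Ed) :
    ofR R sf rf r * gen R sf rf x = gen R sf rf x * ofR R sf rf r := by
  rw [ofR, gen, ← map_mul, ← map_mul]
  congr 1
  rw [genF, MonoidAlgebra.of_apply, MonoidAlgebra.single_mul_single,
    MonoidAlgebra.single_mul_single, one_mul, mul_one, one_mul, mul_one]

lemma ofR_comm_gE (r : R) (f : Ed) :
    ofR R sf rf r * gE R sf rf f = gE R sf rf f * ofR R sf rf r :=
  ofR_comm_gen R sf rf r (Gen.edge f)

lemma ofR_comm_gG (r : R) (f : Ed) :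
    ofR R sf rf r * gG R sf rf f = gG R sf rf f * ofR R sf rf r :=
  ofR_comm_gen R sf rf r (Gen.ghost f)

lemma ofR_comm_real (r : R) {u w : V} (α : GPath sf rf u w) :
    ofR R sf rf r * realElem R sf rf α = realElem R sf rf α * ofR R sf rf r := by
  induction α with
  | nil v => exact ofR_comm_gen R sf rf r _
  | cons f p ih =>
      rw [realElem_cons, ← mul_assoc, ofR_comm_gE, mul_assoc, ih, ← mul_assoc]

lemma ofR_comm_ghost (r : R) {u w : V} (α : GPath sf rf u w) :
    ofR R sf rf r * ghostElem R sf rf α = ghostElem R sf rf α * ofR R sf rf r := by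
  induction α with
  | nil v => exact ofR_comm_gen R sf rf r _
  | cons f p ih =>
      rw [ghostElem_cons, ← mul_assoc, ih, mul_assoc, ofR_comm_gG, ← mul_assoc]

lemma ofR_comm_e (r : R) {u w : V} (α : GPath sf rf u w) :
    ofR R sf rf r * (realElem R sf rf α * ghostElem R sf rf α) =
      realElem R sf rf α * ghostElem R sf rf α * ofR R sf rf r := by
  rw [← mul_assoc, ofR_comm_real, mul_assoc, ofR_comm_ghost, ← mul_assoc]

/-! ### The subgroup generated by the idempotents `α α*` -/

noncomputable def esub (n : ℤ) : AddSubgroup (LeavittPathAlgebra R sf rf) :=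
  AddSubgroup.closure
    {x | ∃ (u u' w : V) (α : GPath sf rf u w) (β : GPath sf rf u' w),
      (α.length : ℤ) - (β.length : ℤ) = n ∧ x = realElem R sf rf α * ghostElem R sf rf α}

lemma esub_le_sgMul (n : ℤ) :
    esub R sf rf n ≤ sgMul (componentZ R sf rf n) (componentZ R sf rf (-n)) := by
  rw [esub, AddSubgroup.closure_le]
  rintro x ⟨u, u', w, α, β, hlen, rfl⟩
  have h1 : realElem R sf rf α * ghostElem R sf rf β ∈ componentZ R sf rf n :=
    AddSubgroup.subset_closure ⟨1, u, u', w, α, β, hlen, by rw [ofR_one, one_mul]⟩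
  have h2 : realElem R sf rf β * ghostElem R sf rf α ∈ componentZ R sf rf (-n) :=
    AddSubgroup.subset_closure ⟨1, u', u, w, β, α, by omega, by rw [ofR_one, one_mul]⟩
  have key : realElem R sf rf α * ghostElem R sf rf α =
      (realElem R sf rf α * ghostElem R sf rf β) * (realElem R sf rf β * ghostElem R sf rf α) := by
    simp only [mul_assoc]
    rw [← mul_assoc (ghostElem R sf rf β), ghost_mul_real_self, rng_mul_ghost]
  rw [key]
  exact AddSubgroup.subset_closure ⟨_, h1, _, h2, rfl⟩

lemma esub_mul_mem_comm (n : ℤ) :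
    ∀ a ∈ esub R sf rf n, ∀ b ∈ esub R sf rf n,
      a * b ∈ esub R sf rf n ∧ a * b = b * a := by
  intro a ha
  refine AddSubgroup.closure_induction
    (p := fun a _ => ∀ b ∈ esub R sf rf n, a * b ∈ esub R sf rf n ∧ a * b = b * a)
    ?_ ?_ ?_ ?_ ha
  · rintro x ⟨u, u', w, α, β, hlen, rfl⟩ b hb
    refine AddSubgroup.closure_induction
      (p := fun b _ => realElem R sf rf α * ghostElem R sf rf α * b ∈ esub R sf rf n ∧
        realElem R sf rf α * ghostElem R sf rf α * b = b * (realElem R sf rf α * ghostElem R sf rf α))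
      ?_ ?_ ?_ ?_ hb
    · rintro y ⟨v, v', w', γ, β', hlen', rfl⟩
      rcases e_mul_e_cases R sf rf α γ with ⟨p1, p2⟩ | ⟨p1, p2⟩ | ⟨p1, p2⟩
      · exact ⟨by rw [p1]; exact AddSubgroup.subset_closure ⟨v, v', w', γ, β', hlen', rfl⟩,
          by rw [p1, p2]⟩
      · exact ⟨by rw [p1]; exact AddSubgroup.subset_closure ⟨u, u', w, α, β, hlen, rfl⟩,
          by rw [p1, p2]⟩
      · exact ⟨by rw [p1]; exact zero_mem _, by rw [p1, p2]⟩
    · exact ⟨by rw [mul_zero]; exact zero_mem _, by rw [mul_zero, zero_mul]⟩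
    · rintro y z _ _ ⟨hy1, hy2⟩ ⟨hz1, hz2⟩
      exact ⟨by rw [mul_add]; exact add_mem hy1 hz1, by rw [mul_add, add_mul, hy2, hz2]⟩
    · rintro y _ ⟨hy1, hy2⟩
      refine ⟨(mul_neg _ y).symm ▸ neg_mem hy1, ?_⟩
      exact (mul_neg _ y).trans ((congrArg Neg.neg hy2).trans (neg_mul y _).symm)
  · intro b hb
    exact ⟨by rw [zero_mul]; exact zero_mem _, by rw [zero_mul, mul_zero]⟩
  · intro x y _ _ hx hy b hb
    obtain ⟨hx1, hx2⟩ := hx b hb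
    obtain ⟨hy1, hy2⟩ := hy b hb
    exact ⟨by rw [add_mul]; exact add_mem hx1 hy1, by rw [add_mul, mul_add, hx2, hy2]⟩
  · intro x _ hx b hb
    obtain ⟨hx1, hx2⟩ := hx b hb
    refine ⟨(neg_mul x b).symm ▸ neg_mem hx1, ?_⟩
    exact (neg_mul x b).trans ((congrArg Neg.neg hx2).trans (mul_neg b x).symm)

/-! ### Left and right local units -/

lemma left_absorb (n : ℤ) :
    ∀ s ∈ componentZ R sf rf n, ∃ t ∈ esub R sf rf n, t * s = s := by
  intro s hs
  refine AddSubgroup.closure_induction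
    (p := fun s _ => ∃ t ∈ esub R sf rf n, t * s = s) ?_ ?_ ?_ ?_ hs
  · rintro x ⟨r, u, u', w, α, β, hlen, rfl⟩
    refine ⟨realElem R sf rf α * ghostElem R sf rf α,
      AddSubgroup.subset_closure ⟨u, u', w, α, β, hlen, rfl⟩, ?_⟩
    have hm : realElem R sf rf α * ghostElem R sf rf α *
        (realElem R sf rf α * ghostElem R sf rf β) = realElem R sf rf α * ghostElem R sf rf β := by
      simp only [mul_assoc]
      rw [← mul_assoc (ghostElem R sf rf α), ghost_mul_real_self, rng_mul_ghost]
    have key : realElem R sf rf α * ghostElem R sf rf α *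
        (ofR R sf rf r * (realElem R sf rf α * ghostElem R sf rf β)) =
        ofR R sf rf r * (realElem R sf rf α * ghostElem R sf rf α *
          (realElem R sf rf α * ghostElem R sf rf β)) := by
      conv_lhs => rw [← mul_assoc]
      rw [← ofR_comm_e R sf rf r α, mul_assoc]
    rw [key, hm]
  · exact ⟨0, zero_mem _, by rw [zero_mul]⟩
  · rintro x y _ _ ⟨t1, ht1, e1⟩ ⟨t2, ht2, e2⟩
    obtain ⟨hmem, hcomm⟩ := esub_mul_mem_comm R sf rf n t1 ht1 t2 ht2
    refine ⟨t1 + t2 - t1 * t2, sub_mem (add_mem ht1 ht2) hmem, ?_⟩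
    have hx : t1 * t2 * x = t2 * x := by rw [hcomm, mul_assoc, e1]
    have hy : t1 * t2 * y = t1 * y := by rw [mul_assoc, e2]
    rw [sub_mul, add_mul, mul_add, mul_add, mul_add, e1, e2, hx, hy]
    abel
  · rintro x _ ⟨t, ht, e⟩
    exact ⟨t, ht, (mul_neg t x).trans (congrArg Neg.neg e)⟩

lemma right_absorb (n : ℤ) :
    ∀ s ∈ componentZ R sf rf n, ∃ t ∈ esub R sf rf (-n), s * t = s := by
  intro s hs
  refine AddSubgroup.closure_induction
    (p := fun s _ => ∃ t ∈ esub R sf rf (-n), s * t = s) ?_ ?_ ?_ ?_ hs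
  · rintro x ⟨r, u, u', w, α, β, hlen, rfl⟩
    refine ⟨realElem R sf rf β * ghostElem R sf rf β,
      AddSubgroup.subset_closure ⟨u', u, w, β, α, by omega, rfl⟩, ?_⟩
    rw [mul_assoc, mul_assoc]
    congr 1
    rw [← mul_assoc (ghostElem R sf rf β), ghost_mul_real_self, rng_mul_ghost]
  · exact ⟨0, zero_mem _, by rw [mul_zero]⟩
  · rintro x y _ _ ⟨t1, ht1, e1⟩ ⟨t2, ht2, e2⟩
    obtain ⟨hmem, hcomm⟩ := esub_mul_mem_comm R sf rf (-n) t1 ht1 t2 ht2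
    refine ⟨t1 + t2 - t1 * t2, sub_mem (add_mem ht1 ht2) hmem, ?_⟩
    have hx : x * (t1 * t2) = x * t2 := by rw [← mul_assoc, e1]
    have hy : y * (t1 * t2) = y * t1 := by rw [hcomm, ← mul_assoc, e2]
    rw [mul_sub, mul_add, add_mul, add_mul, add_mul, e1, e2, hx, hy]
    abel
  · rintro x _ ⟨t, ht, e⟩
    exact ⟨t, ht, (neg_mul x t).trans (congrArg Neg.neg e)⟩

end Aux
end LPA

open LPA in
/-- If `E` is a (possibly non-finite) directed graph and `R` an associative
unital ring, then `L_R(E)`, with its canonical `ℤ`-gradation, is nearly epsilon-strongly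
`ℤ`-graded: for every `n ∈ ℤ` and every `s ∈ S_n` one has `s ∈ (S_n S_{-n}) s` and
`s ∈ s (S_{-n} S_n)`. -/
theorem leavitt_nearlyEpsilonStrongly_int (R : Type*) [Ring R] {V Ed : Type*}
    (sf rf : Ed → V) :
    ∀ n : ℤ, ∀ s ∈ componentZ R sf rf n,
      (∃ t ∈ sgMul (componentZ R sf rf n) (componentZ R sf rf (-n)), t * s = s) ∧
      (∃ t ∈ sgMul (componentZ R sf rf (-n)) (componentZ R sf rf n), s * t = s) := by
  intro n s hs
  constructor
  · obtain ⟨t, ht, e⟩ := left_absorb R sf rf n s hs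
    exact ⟨t, esub_le_sgMul R sf rf n ht, e⟩
  · obtain ⟨t, ht, e⟩ := right_absorb R sf rf n s hs
    refine ⟨t, ?_, e⟩
    have := esub_le_sgMul R sf rf (-n) ht
    rwa [neg_neg] at this
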